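/- arXiv:2504.04433 — 3 statements merged into one kernel-verified Lean document; each statement's English description precedes it below -/
import Mathlib

section
/- Let f be a formal power series in n variables with blocks f[0], f[1], …, and let m ∈ ℕ. Then for every multi-index α with |α| = k, the coefficient of f^m at α equals Σ (m!/(v₀!⋯v_k!)) · (f[0]^{v₀}⋯f[k]^{v_k})_α, where the sum ranges over all nonnegative integer tuples (v₀,…,v_k) with v₀+v₁+⋯+v_k = m and v₁+2v₂+⋯+k·v_k = k. -/
/-- The `k`-th block of `f`: coefficients of total degree `k` kept, others zero. -/
noncomputable def block {F : Type*} [Field F] {n : ℕ}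
    (f : MvPowerSeries (Fin n) F) (k : ℕ) : MvPowerSeries (Fin n) F :=
  fun α => if (∑ i, α i) = k then MvPowerSeries.coeff α f else 0

/-!
The blocks `f[0], …, f[k]` sum to the truncation of `f` below total degree `k + 1`, and a
coefficient of total degree `k` of `f ^ m` only involves that truncation. Expanding its `m`-th
power by the multinomial theorem, the term indexed by `v` is homogeneous of degree
`∑ i * v i`, so only the tuples of weighted degree `k` contribute at `α`.
-/

namespace MvPowerSeries

variable {σ R : Type*} [CommSemiring R]

theorem isHomogeneous_one : (1 : MvPowerSeries σ R).IsHomogeneous 0 := fun {d} hd ↦ by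
  classical
  rw [coeff_one] at hd
  split_ifs at hd with hd0
  · rw [hd0, map_zero]
  · exact absurd rfl hd

theorem IsHomogeneous.prod {ι : Type*} (s : Finset ι) (f : ι → MvPowerSeries σ R) (p : ι → ℕ)
    (h : ∀ i ∈ s, (f i).IsHomogeneous (p i)) :
    (∏ i ∈ s, f i).IsHomogeneous (∑ i ∈ s, p i) := by
  classical
  induction s using Finset.induction_on with
  | empty =>
    rw [Finset.prod_empty, Finset.sum_empty]
    exact isHomogeneous_one
  | insert i s hi ih =>
    rw [Finset.prod_insert hi, Finset.sum_insert hi]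
    exact IsHomogeneous.mul (h i (s.mem_insert_self i))
      (ih fun j hj ↦ h j (Finset.mem_insert_of_mem hj))

theorem IsHomogeneous.pow {f : MvPowerSeries σ R} {p : ℕ} (hf : f.IsHomogeneous p) (m : ℕ) :
    (f ^ m).IsHomogeneous (p * m) := by
  induction m with
  | zero => exact isHomogeneous_one
  | succ m ih =>
    rw [pow_succ, Nat.mul_succ]
    exact ih.mul hf

theorem coeff_pow_eq_coeff_sum_homogeneousComponent_pow [Finite σ] (f : MvPowerSeries σ R)
    (m : ℕ) {n : ℕ} {d : σ →₀ ℕ} (hd : d.degree < n) :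
    coeff d (f ^ m) = coeff d ((∑ i ∈ Finset.range n, homogeneousComponent i f) ^ m) := by
  rw [← truncTotal_eq_sum, ← MvPolynomial.coe_pow, MvPolynomial.coeff_coe,
    coeff_truncTotal_pow f hd]

end MvPowerSeries

open MvPowerSeries

theorem block_eq_homogeneousComponent {F : Type*} [Field F] {n : ℕ}
    (f : MvPowerSeries (Fin n) F) (k : ℕ) : block f k = homogeneousComponent k f := by
  ext d
  rw [coeff_homogeneousComponent, Finsupp.degree_eq_sum]
  rfl

/-- For `|α| = k`, the coefficient of `f^m` at `α` equals
`Σ (m!/(v₀!⋯v_k!)) · (f[0]^{v₀} ⋯ f[k]^{v_k})_α`, the sum over all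
`(v₀,…,v_k)` with `v₀ + ⋯ + v_k = m` and `v₁ + 2v₂ + ⋯ + k·v_k = k`. -/
theorem coeff_pow_blocks {F : Type*} [Field F] {n : ℕ}
    (f : MvPowerSeries (Fin n) F) (m : ℕ) (k : ℕ) (α : Fin n →₀ ℕ)
    (hα : (∑ i, α i) = k) :
    MvPowerSeries.coeff α (f ^ m) =
      ∑ v ∈ (Finset.Nat.antidiagonalTuple (k + 1) m).filter
          (fun v => ∑ i : Fin (k + 1), (i : ℕ) * v i = k),
        (Nat.multinomial Finset.univ v : F) *
          MvPowerSeries.coeff α (∏ i : Fin (k + 1), block f (i : ℕ) ^ v i) := by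
  have hdeg : α.degree = k := by rw [Finsupp.degree_eq_sum, hα]
  simp only [block_eq_homogeneousComponent]
  rw [coeff_pow_eq_coeff_sum_homogeneousComponent_pow f m (hdeg.trans_lt k.lt_succ_self),
    Finset.sum_range, Finset.sum_pow_eq_sum_piAntidiag,
    Finset.piAntidiag_univ_fin_eq_antidiagonalTuple, map_sum]
  simp only [← nsmul_eq_mul, map_nsmul]
  refine (Finset.sum_filter_of_ne fun v _ hv ↦ ?_).symm
  by_contra hvk
  have hhom : (∏ i : Fin (k + 1), homogeneousComponent i f ^ v i).IsHomogeneous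
      (∑ i : Fin (k + 1), i * v i) :=
    -- `@fun`: `IsHomogeneous` unfolds to `∀ {d}, …`, which would otherwise trigger an implicit lambda
    IsHomogeneous.prod _ _ _ @fun (i : Fin (k + 1)) _ ↦
      IsHomogeneous.pow (isHomogeneous_homogeneousComponent f i) (v i)
  exact hv (by rw [hhom.coeff_eq_zero (hdeg.trans_ne (Ne.symm hvk)), smul_zero])
end

section
/- Chain Rule: Let f be a formal power series in n variables and G = (g₁,…,gₙ) a vector of formal power series in n variables such that the family (G^α)_{α∈ℕ₀ⁿ} admits addition (for each multi-index β only finitely many G^α have nonzero coefficient at indices ≤ β). Then for every j, D_j(f∘G) = Σ_{i=1}^n (D_i(f)∘G) · D_j(g_i). -/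
open MvPowerSeries

/-- The formal partial derivative `D_j f = Σ_α (α_j + 1) a_{α + e_j} X^α`. -/
noncomputable def D {F : Type*} [Field F] {n : ℕ} (j : Fin n)
    (f : MvPowerSeries (Fin n) F) : MvPowerSeries (Fin n) F :=
  fun α => ((α j + 1 : ℕ) : F) * coeff (α + Finsupp.single j 1) f

/-- The composition `f ∘ G = Σ_α a_α g₁^{α₁}⋯gₙ^{αₙ}`, defined coefficientwise
by the (finitely supported) sum of the `γ`-coefficients. -/
noncomputable def comp {F : Type*} [Field F] {n : ℕ}
    (f : MvPowerSeries (Fin n) F) (G : Fin n → MvPowerSeries (Fin n) F) :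
    MvPowerSeries (Fin n) F :=
  fun γ => ∑ᶠ α : Fin n →₀ ℕ, coeff α f * coeff γ (∏ i, (G i) ^ (α i))

/-!
Give `F` the discrete topology and power series the coefficientwise topology. The hypothesis
makes `f ∘ G` the sum of the family `a_α • G^α`. Partial derivatives and multiplication are
continuous, so `D_j` can be applied termwise, and the Leibniz rule
`D_j G^α = Σ_i α_i G^(α - e_i) D_j g_i`, followed by the reindexing `α = β + e_i`, turns that sum
into `Σ_i (D_i f ∘ G) · D_j g_i`.
-/

theorem Derivation.leibniz_finsetProd {R A M : Type*} [CommSemiring R] [CommSemiring A]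
    [Algebra R A] [AddCommMonoid M] [Module A M] [Module R M] (D : Derivation R A M)
    {ι : Type*} [DecidableEq ι] (s : Finset ι) (f : ι → A) :
    D (∏ i ∈ s, f i) = ∑ i ∈ s, (∏ k ∈ s.erase i, f k) • D (f i) := by
  induction s using Finset.induction_on with
  | empty => simp
  | @insert a s ha ih =>
    rw [Finset.prod_insert ha, D.leibniz, ih, Finset.sum_insert ha, Finset.erase_insert ha,
      Finset.smul_sum, add_comm]
    congr 1
    refine Finset.sum_congr rfl fun i hi => ?_
    rw [Finset.erase_insert_of_ne (ne_of_mem_of_not_mem hi ha).symm,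
      Finset.prod_insert fun h => ha (Finset.mem_of_mem_erase h), mul_smul]

theorem Derivation.leibniz_prod_pow {R A : Type*} [CommSemiring R] [CommSemiring A]
    [Algebra R A] (D : Derivation R A A) {ι : Type*} [Fintype ι] [DecidableEq ι]
    (g : ι → A) (α : ι →₀ ℕ) :
    D (∏ i, g i ^ α i) =
      ∑ i, α i • ((∏ k, g k ^ (α - Finsupp.single i 1 : ι →₀ ℕ) k) * D (g i)) := by
  rw [D.leibniz_finsetProd]
  refine Finset.sum_congr rfl fun i _ => ?_
  rw [D.leibniz_pow, ← Finset.mul_prod_erase _ _ (Finset.mem_univ i)]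
  have hprod : ∏ k ∈ Finset.univ.erase i, g k ^ (α - Finsupp.single i 1 : ι →₀ ℕ) k
      = ∏ k ∈ Finset.univ.erase i, g k ^ α k :=
    Finset.prod_congr rfl fun k hk => by
      rw [Finsupp.tsub_apply, Finsupp.single_eq_of_ne (Finset.ne_of_mem_erase hk), tsub_zero]
  rw [hprod, Finsupp.tsub_apply, Finsupp.single_eq_same, smul_eq_mul, smul_eq_mul, mul_smul_comm]
  ring

namespace MvPowerSeries.WithPiTopology

theorem continuous_pderiv {σ R : Type*} [CommSemiring R] [TopologicalSpace R]
    [IsTopologicalSemiring R] (i : σ) : Continuous (pderiv R i) :=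
  continuous_pi fun γ => ((continuous_coeff R (γ + Finsupp.single i 1)).mul_const _).congr
    fun f => (coeff_pderiv f γ).symm

end MvPowerSeries.WithPiTopology

open MvPowerSeries.WithPiTopology

theorem D_eq_pderiv {F : Type*} [Field F] {n : ℕ} (j : Fin n) : D j = ⇑(pderiv F j) := by
  funext f
  ext γ
  change ((γ j + 1 : ℕ) : F) * coeff (γ + Finsupp.single j 1) f = _
  rw [coeff_pderiv, mul_comm]
  push_cast
  rfl

section Composition

variable {F : Type*} [Field F] [TopologicalSpace F] {n : ℕ}

theorem hasSum_comp (f : MvPowerSeries (Fin n) F) (G : Fin n → MvPowerSeries (Fin n) F)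
    (hG : ∀ γ, {α : Fin n →₀ ℕ | coeff γ (∏ i, G i ^ α i) ≠ 0}.Finite) :
    HasSum (fun α => coeff α f • ∏ i, G i ^ α i) (comp f G) := by
  rw [hasSum_iff_hasSum_coeff]
  intro γ
  have hsupp : (Function.support fun α => coeff α f * coeff γ (∏ i, G i ^ α i)).Finite :=
    (hG γ).subset fun α hα => right_ne_zero_of_mul hα
  simp only [map_smul, smul_eq_mul]
  change HasSum _ (∑ᶠ α, coeff α f * coeff γ (∏ i, G i ^ α i))
  rw [finsum_eq_sum _ hsupp]
  exact hasSum_sum_of_ne_finset_zero fun α hα =>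
    Function.notMem_support.mp fun h => hα (hsupp.mem_toFinset.mpr h)

theorem hasSum_comp_pderiv_mul [IsTopologicalSemiring F] (f : MvPowerSeries (Fin n) F)
    (G : Fin n → MvPowerSeries (Fin n) F)
    (hG : ∀ γ, {α : Fin n →₀ ℕ | coeff γ (∏ i, G i ^ α i) ≠ 0}.Finite)
    (i : Fin n) (q : MvPowerSeries (Fin n) F) :
    HasSum
      (fun α => coeff α f • (α i • ((∏ k, G k ^ (α - Finsupp.single i 1 : Fin n →₀ ℕ) k) * q)))
      (comp (pderiv F i f) G * q) := by
  have h := (hasSum_comp (pderiv F i f) G hG).mul_right q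
  rw [← (add_left_injective (Finsupp.single i 1)).hasSum_iff]
  · convert h using 1
    · rfl
    funext β
    simp only [Function.comp_apply, add_tsub_cancel_right, coeff_pderiv, Finsupp.add_apply,
      Finsupp.single_eq_same, smul_mul_assoc, mul_comm _ ((β i : F) + 1), mul_smul]
    rw [← Nat.cast_succ, Nat.cast_smul_eq_nsmul]
    exact smul_comm _ _ _
  · intro α hα
    have hαi : α i = 0 := by
      by_contra hαi
      exact hα ⟨α - Finsupp.single i 1, tsub_add_cancel_of_le
        (Finsupp.single_le_iff.mpr (Nat.one_le_iff_ne_zero.mpr hαi))⟩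
    rw [hαi, zero_smul, smul_zero]

end Composition

/-- Chain Rule: if the family `(G^α)` admits addition (for each `β` only
finitely many `α` give `G^α` a nonzero coefficient at some index `≤ β`),
then `D_j (f ∘ G) = Σ_i (D_i f ∘ G) · D_j g_i`. -/
theorem chain_rule {F : Type*} [Field F] {n : ℕ}
    (f : MvPowerSeries (Fin n) F) (G : Fin n → MvPowerSeries (Fin n) F)
    (hadd : ∀ β : Fin n →₀ ℕ,
      {α : Fin n →₀ ℕ | ∃ γ ≤ β, coeff γ (∏ i, (G i) ^ (α i)) ≠ 0}.Finite)
    (j : Fin n) :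
    D j (comp f G) = ∑ i, comp (D i f) G * D j (G i) := by
  let _ : TopologicalSpace F := ⊥
  have : DiscreteTopology F := ⟨rfl⟩
  have hG : ∀ γ, {α : Fin n →₀ ℕ | coeff γ (∏ i, G i ^ α i) ≠ 0}.Finite :=
    fun γ => (hadd γ).subset fun α hα => ⟨γ, le_rfl, hα⟩
  simp only [D_eq_pderiv]
  have hlhs : HasSum (fun α => coeff α f • pderiv F j (∏ i, G i ^ α i))
      (pderiv F j (comp f G)) := by
    simpa only [Function.comp_def, Derivation.map_smul] using
      (hasSum_comp f G hG).map (pderiv F j) (continuous_pderiv j)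
  have hrhs : HasSum (fun α => coeff α f • pderiv F j (∏ i, G i ^ α i))
      (∑ i, comp (pderiv F i f) G * pderiv F j (G i)) := by
    simp only [Derivation.leibniz_prod_pow, Finset.smul_sum]
    exact hasSum_sum fun i _ => hasSum_comp_pderiv_mul f G hG i _
  exact hlhs.unique hrhs
end

section
/- Let G = (g₁,…,gₙ) be a vector of formal power series in n variables with zero constant terms such that the matrix of linear coefficients J_G(θ) = [coefficient of x_j in g_i] is invertible. Then there exists a vector H = (h₁,…,hₙ) of formal power series with zero constant terms such that H∘G = I = (x₁,…,xₙ). -/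
/-!
Composition with `G` is substitution `f ↦ f(G)`, a ring homomorphism that does not lower the
order. For `p` homogeneous of degree `k`, the degree-`k` part of `p(G)` is `p(J_G x)`, and as
`J_G` is invertible every homogeneous polynomial of degree `k` has this form. So a target `t`
is matched one degree at a time: if `t - P(G)` has order at least `k`, adding the homogeneous
`p` of degree `k` with `p(J_G x)` equal to the degree-`k` part of `t - P(G)` raises the order to
`k + 1`. The corrections sum to a series `h` with `h(G) = t`; for `t = x_i` its constant term
vanishes, since substituting nonunits preserves constant terms.
-/

open MvPowerSeries

theorem Matrix.exists_isHomogeneous_bind₁_toMvPolynomial_eq {σ R : Type*} [Fintype σ]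
    [DecidableEq σ] [CommSemiring R] {A : Matrix σ σ R} (hA : IsUnit A)
    {q : MvPolynomial σ R} {k : ℕ} (hq : q.IsHomogeneous k) :
    ∃ p : MvPolynomial σ R, p.IsHomogeneous k ∧ MvPolynomial.bind₁ A.toMvPolynomial p = q := by
  obtain ⟨U, rfl⟩ := hA
  have hp : (MvPolynomial.bind₁ (↑U⁻¹ : Matrix σ σ R).toMvPolynomial q).IsHomogeneous k := by
    have := hq.aeval _ (Matrix.toMvPolynomial_isHomogeneous (↑U⁻¹ : Matrix σ σ R))
    rwa [one_mul] at this
  refine ⟨_, hp, ?_⟩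
  simp_rw [MvPolynomial.bind₁_bind₁, ← Matrix.toMvPolynomial_mul, Units.inv_mul,
    Matrix.toMvPolynomial_one, MvPolynomial.bind₁_X_left, AlgHom.id_apply]

namespace MvPowerSeries

variable {σ τ R : Type*}

section CommSemiring

variable [CommSemiring R]

theorem homogeneousComponent_zero_one :
    homogeneousComponent 0 (1 : MvPowerSeries σ R) = 1 := by
  classical
  ext d
  simp +contextual [coeff_homogeneousComponent, coeff_one, Finsupp.degree_eq_zero_iff]

theorem homogeneousComponent_pow_of_le_order {f : MvPowerSeries σ R} {k : ℕ}
    (hf : k ≤ f.order) (m : ℕ) :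
    homogeneousComponent (k * m) (f ^ m) = homogeneousComponent k f ^ m := by
  induction m with
  | zero => simp [homogeneousComponent_zero_one]
  | succ m ih =>
    have hpow : ((k * m : ℕ) : ℕ∞) ≤ (f ^ m).order :=
      calc ((k * m : ℕ) : ℕ∞) = m • (k : ℕ∞) := by simp [mul_comm]
        _ ≤ m • f.order := nsmul_le_nsmul_right hf m
        _ ≤ (f ^ m).order := le_order_pow m
    rw [pow_succ, pow_succ, Nat.mul_succ, homogeneousComponent_mul_of_le_order hpow hf, ih]

theorem homogeneousComponent_prod_of_le_order {ι : Type*} (s : Finset ι)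
    {f : ι → MvPowerSeries σ R} {k : ι → ℕ} (hf : ∀ i ∈ s, k i ≤ (f i).order) :
    homogeneousComponent (∑ i ∈ s, k i) (∏ i ∈ s, f i)
      = ∏ i ∈ s, homogeneousComponent (k i) (f i) := by
  classical
  induction s using Finset.induction_on with
  | empty => simp [homogeneousComponent_zero_one]
  | insert a s ha ih =>
    have hs : ((∑ i ∈ s, k i : ℕ) : ℕ∞) ≤ (∏ i ∈ s, f i).order := by
      push_cast
      exact (Finset.sum_le_sum fun i hi => hf i (Finset.mem_insert_of_mem hi)).trans
        (le_order_prod f s)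
    rw [Finset.sum_insert ha, Finset.prod_insert ha, Finset.prod_insert ha,
      homogeneousComponent_mul_of_le_order (hf a (Finset.mem_insert_self a s)) hs,
      ih fun i hi => hf i (Finset.mem_insert_of_mem hi)]

theorem homogeneousComponent_aeval_of_isHomogeneous {G : σ → MvPowerSeries τ R}
    (hG : ∀ i, constantCoeff (G i) = 0) {p : MvPolynomial σ R} {k : ℕ}
    (hp : p.IsHomogeneous k) :
    homogeneousComponent k (MvPolynomial.aeval G p)
      = MvPolynomial.aeval (fun i => homogeneousComponent 1 (G i)) p := by
  conv_lhs => rw [p.as_sum]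
  conv_rhs => rw [p.as_sum]
  simp only [map_sum, MvPolynomial.aeval_monomial, ← Algebra.smul_def, map_smul]
  refine Finset.sum_congr rfl fun α hα => ?_
  have hk : ∑ i ∈ α.support, α i = k := by
    rw [← Finsupp.degree_apply, Finsupp.degree_eq_weight_one]
    exact hp (MvPolynomial.mem_support_iff.mp hα)
  rw [← hk, Finsupp.prod, homogeneousComponent_prod_of_le_order _
    fun i _ => le_order_pow_of_constantCoeff_eq_zero _ (hG i)]
  congr 1
  refine Finset.prod_congr rfl fun i _ => ?_
  simpa using homogeneousComponent_pow_of_le_order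
    (one_le_order_iff_constCoeff_eq_zero.mpr (hG i)) (α i)

theorem exists_isHomogeneous_coe_eq_homogeneousComponent [Finite σ] (f : MvPowerSeries σ R)
    (k : ℕ) : ∃ q : MvPolynomial σ R,
      q.IsHomogeneous k ∧ (q : MvPowerSeries σ R) = homogeneousComponent k f := by
  refine ⟨MvPolynomial.homogeneousComponent k (truncTotal (k + 1) f),
    MvPolynomial.homogeneousComponent_isHomogeneous _ _, ?_⟩
  ext d
  simp only [MvPolynomial.coeff_coe, MvPolynomial.coeff_homogeneousComponent,
    coeff_truncTotal_eq_ite, coeff_homogeneousComponent]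
  split_ifs <;> grind

/-- `J_G(θ)` in the paper's notation. -/
noncomputable def linearCoeffs (G : σ → MvPowerSeries τ R) : Matrix σ τ R :=
  Matrix.of fun i j => coeff (Finsupp.single j 1) (G i)

section LinearPart

variable [Fintype τ]

theorem coe_toMvPolynomial_linearCoeffs (G : σ → MvPowerSeries τ R) (i : σ) :
    ((linearCoeffs G).toMvPolynomial i : MvPowerSeries τ R) = homogeneousComponent 1 (G i) := by
  classical
  ext d
  rw [MvPolynomial.coeff_coe, coeff_homogeneousComponent, Matrix.toMvPolynomial,
    MvPolynomial.coeff_sum]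
  simp only [MvPolynomial.coeff_monomial, linearCoeffs, Matrix.of_apply]
  split_ifs with hd
  · obtain ⟨j, rfl⟩ : d ∈ Set.range (fun j : τ => Finsupp.single j 1) := by
      rwa [Finsupp.range_single_one]
    simp [Finsupp.single_left_inj one_ne_zero]
  · exact Finset.sum_eq_zero fun j _ =>
      if_neg fun (h : Finsupp.single j 1 = d) => hd (h ▸ Finsupp.degree_single j 1)

theorem homogeneousComponent_aeval_eq_coe_bind₁ {G : σ → MvPowerSeries τ R}
    (hG : ∀ i, constantCoeff (G i) = 0) {p : MvPolynomial σ R} {k : ℕ}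
    (hp : p.IsHomogeneous k) :
    homogeneousComponent k (MvPolynomial.aeval G p)
      = (MvPolynomial.bind₁ (linearCoeffs G).toMvPolynomial p : MvPowerSeries τ R) := by
  rw [homogeneousComponent_aeval_of_isHomogeneous hG hp]
  simp_rw [← coe_toMvPolynomial_linearCoeffs]
  simpa [MvPolynomial.coeToMvPowerSeries.algHom_apply] using
    (MvPolynomial.comp_aeval_apply (f := (linearCoeffs G).toMvPolynomial)
      (MvPolynomial.coeToMvPowerSeries.algHom R) p).symm

end LinearPart

/-- The series `∑ k, p k` when each `p k` is homogeneous of degree `k`. -/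
noncomputable def ofHomogeneousComponents (p : ℕ → MvPolynomial σ R) : MvPowerSeries σ R :=
  fun d => MvPolynomial.coeff d (p d.degree)

end CommSemiring

section CommRing

variable [CommRing R]

theorem le_order_sub {f g : MvPowerSeries σ R} {k : ℕ∞} (hf : k ≤ f.order) (hg : k ≤ g.order) :
    k ≤ (f - g).order := by
  rw [sub_eq_add_neg]
  exact (le_min hf (by rwa [order_neg])).trans min_order_le_add

theorem le_order_sub_of_homogeneousComponent_eq {f g : MvPowerSeries σ R} {k : ℕ}
    (hf : k ≤ f.order) (hg : k ≤ g.order)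
    (h : homogeneousComponent k f = homogeneousComponent k g) :
    ((k + 1 : ℕ) : ℕ∞) ≤ (f - g).order := by
  refine nat_le_order fun d hd => ?_
  rw [map_sub, sub_eq_zero]
  rcases (Nat.lt_succ_iff.mp hd).lt_or_eq with hlt | rfl
  · have hlt : (d.degree : ℕ∞) < k := by exact_mod_cast hlt
    rw [coeff_of_lt_order (hlt.trans_le hf), coeff_of_lt_order (hlt.trans_le hg)]
  · simpa [coeff_homogeneousComponent] using congrArg (coeff d) h

theorem le_order_ofHomogeneousComponents_sub_sum_range {p : ℕ → MvPolynomial σ R}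
    (hp : ∀ k, (p k).IsHomogeneous k) (k : ℕ) :
    (k : ℕ∞) ≤ (ofHomogeneousComponents p - ↑(∑ j ∈ Finset.range k, p j)).order := by
  refine nat_le_order fun d hd => ?_
  rw [map_sub, MvPolynomial.coeff_coe, MvPolynomial.coeff_sum, sub_eq_zero,
    Finset.sum_eq_single_of_mem _ (Finset.mem_range.mpr hd)
      fun j _ hj => (hp j).coeff_eq_zero (Ne.symm hj)]
  rfl

section Subst

variable [Finite σ] {G : σ → MvPowerSeries τ R}

theorem order_le_order_subst (hG : ∀ i, constantCoeff (G i) = 0) (f : MvPowerSeries σ R) :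
    f.order ≤ (subst G f).order := by
  refine le_trans ?_ (le_order_subst (hasSubst_of_constantCoeff_zero hG) f)
  exact le_mul_of_one_le_left' (le_iInf fun i => one_le_order_iff_constCoeff_eq_zero.mpr (hG i))

theorem le_order_aeval_of_isHomogeneous (hG : ∀ i, constantCoeff (G i) = 0)
    {p : MvPolynomial σ R} {k : ℕ} (hp : p.IsHomogeneous k) :
    (k : ℕ∞) ≤ (MvPolynomial.aeval G p).order := by
  rw [← subst_coe]
  refine le_trans (nat_le_order fun d hd => ?_) (order_le_order_subst hG _)
  rw [MvPolynomial.coeff_coe]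
  exact hp.coeff_eq_zero hd.ne

theorem constantCoeff_subst_of_constantCoeff_eq_zero (hG : ∀ i, constantCoeff (G i) = 0)
    (f : MvPowerSeries σ R) : constantCoeff (subst G f) = constantCoeff f := by
  have hsub := hasSubst_of_constantCoeff_zero hG
  have := constantCoeff_subst_eq_zero hsub hG (f := f - C (constantCoeff f)) (by simp)
  rwa [subst_sub hsub, subst_C, map_sub, constantCoeff_C, sub_eq_zero] at this

end Subst

section Inverse

variable [Fintype σ] [DecidableEq σ] {G : σ → MvPowerSeries σ R}

theorem exists_isHomogeneous_le_order_sub_aeval_add (hG : ∀ i, constantCoeff (G i) = 0)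
    (hA : IsUnit (linearCoeffs G)) (t : MvPowerSeries σ R) (k : ℕ) (P : MvPolynomial σ R) :
    ∃ p : MvPolynomial σ R, p.IsHomogeneous k ∧
      ((k : ℕ∞) ≤ (t - MvPolynomial.aeval G P).order →
        ((k + 1 : ℕ) : ℕ∞) ≤ (t - MvPolynomial.aeval G (P + p)).order) := by
  obtain ⟨q, hq, hqr⟩ :=
    exists_isHomogeneous_coe_eq_homogeneousComponent (t - MvPolynomial.aeval G P) k
  obtain ⟨p, hp, rfl⟩ := Matrix.exists_isHomogeneous_bind₁_toMvPolynomial_eq hA hq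
  refine ⟨p, hp, fun hk => ?_⟩
  rw [map_add, ← sub_sub]
  exact le_order_sub_of_homogeneousComponent_eq hk (le_order_aeval_of_isHomogeneous hG hp)
    (by rw [← hqr, homogeneousComponent_aeval_eq_coe_bind₁ hG hp])

theorem exists_isHomogeneous_seq_le_order_sub_aeval_sum (hG : ∀ i, constantCoeff (G i) = 0)
    (hA : IsUnit (linearCoeffs G)) (t : MvPowerSeries σ R) :
    ∃ p : ℕ → MvPolynomial σ R, (∀ k, (p k).IsHomogeneous k) ∧
      ∀ k : ℕ, (k : ℕ∞) ≤ (t - MvPolynomial.aeval G (∑ j ∈ Finset.range k, p j)).order := by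
  choose next hnext_hom hnext using exists_isHomogeneous_le_order_sub_aeval_add hG hA t
  let S : ℕ → MvPolynomial σ R := fun k => Nat.rec 0 (fun k P => P + next k P) k
  have hS : ∀ k, ∑ j ∈ Finset.range k, next j (S j) = S k := by
    intro k
    induction k with
    | zero => rfl
    | succ k ih => rw [Finset.sum_range_succ, ih]
  refine ⟨fun j => next j (S j), fun j => hnext_hom j _, fun k => ?_⟩
  rw [hS]
  induction k with
  | zero => simp
  | succ k ih => exact hnext k (S k) ih

theorem exists_subst_eq (hG : ∀ i, constantCoeff (G i) = 0) (hA : IsUnit (linearCoeffs G))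
    (t : MvPowerSeries σ R) : ∃ h : MvPowerSeries σ R, subst G h = t := by
  obtain ⟨p, hp, hpt⟩ := exists_isHomogeneous_seq_le_order_sub_aeval_sum hG hA t
  set h := ofHomogeneousComponents p
  refine ⟨h, (sub_eq_zero.mp (order_eq_top_iff.mp
    (ENat.eq_top_iff_forall_ge.mpr fun k => ?_))).symm⟩
  set P := ∑ j ∈ Finset.range k, p j
  have hsplit : t - subst G h = (t - MvPolynomial.aeval G P) - subst (R := R) G (h - P) := by
    rw [subst_sub (hasSubst_of_constantCoeff_zero hG), subst_coe]
    ring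
  rw [hsplit]
  exact le_order_sub (hpt k)
    ((le_order_ofHomogeneousComponents_sub_sum_range hp k).trans (order_le_order_subst hG _))

end Inverse

end CommRing

end MvPowerSeries

theorem comp_eq_subst {F : Type*} [Field F] {n : ℕ} {G : Fin n → MvPowerSeries (Fin n) F}
    (hG : ∀ i, constantCoeff (G i) = 0) (f : MvPowerSeries (Fin n) F) : comp f G = subst G f := by
  ext γ
  rw [coeff_subst (hasSubst_of_constantCoeff_zero hG)]
  refine finsum_congr fun α => ?_
  rw [smul_eq_mul, Finsupp.prod_pow]

/-- If the matrix of linear coefficients `J_G(θ)` of a nonunit vector `G` is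
invertible, then `G` has a left composition inverse `H` consisting of
nonunit power series with `H ∘ G = (x₁,…,xₙ)`. -/
theorem comp_inverse_exists {F : Type*} [Field F] {n : ℕ}
    (G : Fin n → MvPowerSeries (Fin n) F)
    (hG : ∀ i, coeff 0 (G i) = 0)
    (hJ : IsUnit (Matrix.of fun i j => coeff (Finsupp.single j 1) (G i))) :
    ∃ H : Fin n → MvPowerSeries (Fin n) F,
      (∀ i, coeff 0 (H i) = 0) ∧ ∀ i, comp (H i) G = MvPowerSeries.X i := by
  have hG' : ∀ i, constantCoeff (G i) = 0 := hG
  have hA : IsUnit (linearCoeffs G) := hJ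
  choose H hH using fun i => exists_subst_eq hG' hA (X i)
  refine ⟨H, fun i => ?_, fun i => by rw [comp_eq_subst hG', hH]⟩
  rw [coeff_zero_eq_constantCoeff_apply, ← constantCoeff_subst_of_constantCoeff_eq_zero hG', hH,
    constantCoeff_X]
end
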